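/- arXiv:1509.06236 — 4 statements merged into one kernel-verified Lean document; each statement's English description precedes it below -/
import Mathlib

section
/- Let D = diag(σ₁, σ₂, σ₃) with σ₁ + σ₂ ≥ 2, set c = 2/(σ₁+σ₂) and s = √(1 − c²), and let R̂ be the rotation about the z-axis with matrix rows (c, −s, 0), (s, c, 0), (0, 0, 1). Then ‖sym(R̂D − 1)‖² = (1/2)(σ₁ − σ₂)² + (σ₃ − 1)². -/
open Matrix

noncomputable section

/-- Squared Frobenius norm. -/
def fnormSq (X : Matrix (Fin 3) (Fin 3) ℝ) : ℝ := ∑ i, ∑ j, (X i j)^2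

/-- Symmetric part. -/
def symPart (X : Matrix (Fin 3) (Fin 3) ℝ) : Matrix (Fin 3) (Fin 3) ℝ :=
  (1/2 : ℝ) • (X + Xᵀ)

/-- With `D = diag(σ₁,σ₂,σ₃)`, `σ₁+σ₂ ≥ 2`, `c = 2/(σ₁+σ₂)`, `s = √(1−c²)`, and
`R̂` the z-axis rotation with rows `(c,−s,0),(s,c,0),(0,0,1)`, one has
`‖sym(R̂D − 1)‖² = (1/2)(σ₁−σ₂)² + (σ₃−1)²`. -/
theorem sym_energy_of_optimal_relative_rotation
    (σ₁ σ₂ σ₃ : ℝ) (h₁ : 0 < σ₁) (h₂ : 0 < σ₂) (h₃ : 0 < σ₃)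
    (hs : 2 ≤ σ₁ + σ₂)
    (c s : ℝ) (hc : c = 2 / (σ₁ + σ₂)) (hss : s = Real.sqrt (1 - c^2))
    (R D : Matrix (Fin 3) (Fin 3) ℝ)
    (hR : R = !![c, -s, 0; s, c, 0; 0, 0, 1])
    (hD : D = !![σ₁, 0, 0; 0, σ₂, 0; 0, 0, σ₃]) :
    fnormSq (symPart (R * D - 1)) = (1/2) * (σ₁ - σ₂)^2 + (σ₃ - 1)^2 := by
  have hpos : 0 < σ₁ + σ₂ := by linarith
  have hne : σ₁ + σ₂ ≠ 0 := ne_of_gt hpos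
  have hc1 : c ≤ 1 := by
    rw [hc]; rw [div_le_one hpos]; linarith
  have hc0 : 0 < c := by
    rw [hc]; positivity
  have hs2 : s ^ 2 = 1 - c ^ 2 := by
    rw [hss, Real.sq_sqrt]; nlinarith
  subst hR hD
  simp only [fnormSq, symPart, Fin.sum_univ_three]
  simp only [Matrix.smul_apply, Matrix.add_apply, Matrix.transpose_apply, Matrix.sub_apply,
    Matrix.mul_apply, Fin.sum_univ_three, Matrix.one_apply]
  norm_num [Matrix.vecHead, Matrix.vecTail, Function.comp, Fin.ext_iff, Matrix.cons_val_zero, Matrix.cons_val_one, Matrix.cons_val_two, Matrix.cons_val]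
  have hcs : c * (σ₁ + σ₂) = 2 := by rw [hc]; field_simp
  nlinarith [hs2, hcs, sq_nonneg s, sq_nonneg (σ₁ - σ₂)]
end
end

section
/- Let σ₁ > σ₂ > σ₃ > 0 with σ₁ + σ₂ ≥ 2, D = diag(σ₁,σ₂,σ₃). Then the energy value ‖sym(R̂±D − 1)‖² = (1/2)(σ₁−σ₂)² + (σ₃−1)² realized by the z-axis rotation R̂± by angle ±arccos(2/(σ₁+σ₂)) is less than or equal to the energy (σ₁−1)² + (σ₂−1)² + (σ₃−1)² realized by the identity, with equality if and only if σ₁ + σ₂ = 2. -/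
open Matrix

noncomputable section

/-- For `σ₁ > σ₂ > σ₃ > 0` with `σ₁ + σ₂ ≥ 2`, the energy
`(1/2)(σ₁−σ₂)² + (σ₃−1)²` realized by the z-axis rotations `R̂±` (with
`cos`-entry `2/(σ₁+σ₂)`) equals `‖sym(R̂± D − 1)‖²` and is `≤` the energy
`(σ₁−1)² + (σ₂−1)² + (σ₃−1)²` realized by the identity, with equality iff
`σ₁ + σ₂ = 2`. -/
theorem nonclassical_energy_le_identity_energy
    (σ₁ σ₂ σ₃ : ℝ) (h12 : σ₂ < σ₁) (h23 : σ₃ < σ₂) (h3 : 0 < σ₃)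
    (hs : 2 ≤ σ₁ + σ₂)
    (c s : ℝ) (hc : c = 2 / (σ₁ + σ₂)) (hss : s = Real.sqrt (1 - c^2))
    (Rplus Rminus D : Matrix (Fin 3) (Fin 3) ℝ)
    (hRp : Rplus = !![c, -s, 0; s, c, 0; 0, 0, 1])
    (hRm : Rminus = !![c, s, 0; -s, c, 0; 0, 0, 1])
    (hD : D = !![σ₁, 0, 0; 0, σ₂, 0; 0, 0, σ₃]) :
    fnormSq (symPart (Rplus * D - 1)) = (1/2) * (σ₁ - σ₂)^2 + (σ₃ - 1)^2 ∧
    fnormSq (symPart (Rminus * D - 1)) = (1/2) * (σ₁ - σ₂)^2 + (σ₃ - 1)^2 ∧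
    (1/2) * (σ₁ - σ₂)^2 + (σ₃ - 1)^2 ≤ (σ₁ - 1)^2 + (σ₂ - 1)^2 + (σ₃ - 1)^2 ∧
    ((1/2) * (σ₁ - σ₂)^2 + (σ₃ - 1)^2 = (σ₁ - 1)^2 + (σ₂ - 1)^2 + (σ₃ - 1)^2 ↔
      σ₁ + σ₂ = 2) := by
  have ht : (0:ℝ) < σ₁ + σ₂ := by linarith
  have hct : c * (σ₁ + σ₂) = 2 := by rw [hc]; field_simp
  have hc0 : 0 < c := by rw [hc]; positivity
  have hc1 : c ≤ 1 := by rw [hc, div_le_one ht]; linarith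
  have hs2 : s^2 = 1 - c^2 := by
    rw [hss, Real.sq_sqrt]; nlinarith
  subst hRp hRm hD
  clear hss hc
  refine ⟨?_, ?_, ?_, ?_⟩
  · simp only [fnormSq, symPart, Fin.sum_univ_three, Matrix.sub_apply,
      Matrix.smul_apply, Matrix.add_apply, Matrix.transpose_apply,
      Matrix.mul_apply, Matrix.one_fin_three, Matrix.cons_val', Matrix.cons_val_zero,
      Matrix.cons_val_one, Matrix.head_cons, Matrix.head_fin_const,
      Matrix.empty_val', Matrix.cons_val_fin_one, Matrix.cons_val_two,
      Matrix.tail_cons]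
    simp [Matrix.vecHead, Matrix.vecTail]
    norm_num
    linear_combination ((σ₁ - σ₂)^2/2) * hs2 + ((c*(σ₁+σ₂)-2)/2) * hct
  · simp only [fnormSq, symPart, Fin.sum_univ_three, Matrix.sub_apply,
      Matrix.smul_apply, Matrix.add_apply, Matrix.transpose_apply,
      Matrix.mul_apply, Matrix.one_fin_three, Matrix.cons_val', Matrix.cons_val_zero,
      Matrix.cons_val_one, Matrix.head_cons, Matrix.head_fin_const,
      Matrix.empty_val', Matrix.cons_val_fin_one, Matrix.cons_val_two,
      Matrix.tail_cons]
    simp [Matrix.vecHead, Matrix.vecTail]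
    norm_num
    linear_combination ((σ₁ - σ₂)^2/2) * hs2 + ((c*(σ₁+σ₂)-2)/2) * hct
  · nlinarith [sq_nonneg (σ₁ + σ₂ - 2)]
  · constructor
    · intro h
      have h0 : (σ₁ + σ₂ - 2)^2 = 0 := by linear_combination (-2) * h
      have h1 : σ₁ + σ₂ - 2 = 0 := by
        exact pow_eq_zero_iff (two_ne_zero) |>.mp h0
      linarith
    · intro h; nlinarith [h]
end
end

section
/- Any critical point R ∈ SO(3) of the energy W(R;F) = μ‖sym(RᵀF−1)‖² + μ_c‖skew(RᵀF−1)‖² (for variations on SO(3)) satisfies skew((μ−μ_c)·Ū² − 2μ·Ū) = 0, where Ū = RᵀF. In particular, if Ū is symmetric (as for the polar factor R = R_p), the equation holds, so the polar factor is always a critical point. -/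
open Matrix

noncomputable section

/-- trace (Aᵀ * A) = 0 implies A = 0 over ℝ. -/
lemma aux_trace_transpose_mul_self_eq_zero {n : ℕ} (A : Matrix (Fin n) (Fin n) ℝ)
    (h : Matrix.trace (Aᵀ * A) = 0) : A = 0 := by
  have hsum : ∑ j, ∑ i, A i j * A i j = 0 := by
    simpa [Matrix.trace, Matrix.diag, Matrix.mul_apply] using h
  ext i j
  have h1 : ∀ j ∈ Finset.univ, (0:ℝ) ≤ ∑ i, A i j * A i j := fun j _ =>
    Finset.sum_nonneg fun i _ => mul_self_nonneg _
  have h2 := (Finset.sum_eq_zero_iff_of_nonneg h1).mp hsum j (Finset.mem_univ j)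
  have h3 : ∀ i ∈ Finset.univ, (0:ℝ) ≤ A i j * A i j := fun i _ => mul_self_nonneg _
  have h4 := (Finset.sum_eq_zero_iff_of_nonneg h3).mp h2 i (Finset.mem_univ i)
  simpa using mul_self_eq_zero.mp h4

/-- Skew-symmetric part. -/
def skewPart (X : Matrix (Fin 3) (Fin 3) ℝ) : Matrix (Fin 3) (Fin 3) ℝ :=
  (1/2 : ℝ) • (X - Xᵀ)

/-- Membership in `SO(3)`. -/
def isSO (R : Matrix (Fin 3) (Fin 3) ℝ) : Prop := Rᵀ * R = 1 ∧ R.det = 1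

/-- Euler--Lagrange equations on `SO(3)`: a critical point `R` of
`W(R;F) = μ‖sym(RᵀF−1)‖² + μ_c‖skew(RᵀF−1)‖²` (i.e. the directional
derivative `⟨2μ sym(Ū−1) + 2μ_c skew(Ū), AᵀŪ⟩` vanishes for all skew `A`,
where `Ū = RᵀF`) satisfies `skew((μ−μ_c)Ū² − 2μŪ) = 0`.  In particular,
the equation holds whenever `Ū` is symmetric (e.g. for the polar factor). -/
theorem euler_lagrange_on_SO3
    (μ μc : ℝ) (hμ : 0 < μ) (hμc : 0 ≤ μc)
    (F R : Matrix (Fin 3) (Fin 3) ℝ) (hF : 0 < F.det) (hR : isSO R)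
    (Ubar : Matrix (Fin 3) (Fin 3) ℝ) (hU : Ubar = Rᵀ * F) :
    ((∀ A : Matrix (Fin 3) (Fin 3) ℝ, Aᵀ = -A →
        Matrix.trace ((((2*μ) • symPart (Ubar - 1) + (2*μc) • skewPart Ubar)ᵀ) *
          (Aᵀ * Ubar)) = 0) →
      skewPart ((μ - μc) • (Ubar * Ubar) - (2*μ) • Ubar) = 0) ∧
    (Ubarᵀ = Ubar →
      skewPart ((μ - μc) • (Ubar * Ubar) - (2*μ) • Ubar) = 0) := by
  set S : Matrix (Fin 3) (Fin 3) ℝ :=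
    (2*μ) • symPart (Ubar - 1) + (2*μc) • skewPart Ubar with hS
  set M : Matrix (Fin 3) (Fin 3) ℝ := Ubar * Sᵀ with hM
  set T : Matrix (Fin 3) (Fin 3) ℝ :=
    (μ - μc) • (Ubar * Ubar) - (2*μ) • Ubar with hT
  have key : T - Tᵀ = M - Mᵀ := by
    simp only [hT, hM, hS, symPart, skewPart, transpose_add, transpose_sub,
      transpose_smul, transpose_mul, transpose_transpose, transpose_one,
      Matrix.mul_add, Matrix.mul_sub, Matrix.add_mul, Matrix.sub_mul,
      Matrix.mul_smul, Matrix.smul_mul, Matrix.mul_one, Matrix.one_mul,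
      smul_add, smul_sub, smul_smul]
    module
  constructor
  · intro h
    have hskew : (M - Mᵀ)ᵀ = -(M - Mᵀ) := by
      simp [transpose_sub, neg_sub]
    have h0 := h (M - Mᵀ) hskew
    -- rewrite the trace
    have htr : Matrix.trace (Sᵀ * ((M - Mᵀ)ᵀ * Ubar)) =
        Matrix.trace ((Mᵀ - M) * M) := by
      rw [Matrix.trace_mul_comm, hskew, neg_sub, Matrix.mul_assoc, ← hM]
    have ht : Matrix.trace ((Mᵀ - M) * M) = 0 := by rw [← htr]; exact h0
    have htrA : Matrix.trace ((M - Mᵀ)ᵀ * (M - Mᵀ)) = 0 := by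
      have e1 : Matrix.trace (M * Mᵀ) = Matrix.trace (Mᵀ * M) :=
        Matrix.trace_mul_comm _ _
      have e2 : Matrix.trace (Mᵀ * Mᵀ) = Matrix.trace (M * M) := by
        rw [← Matrix.transpose_mul, Matrix.trace_transpose]
      have ht' : Matrix.trace (Mᵀ * M) - Matrix.trace (M * M) = 0 := by
        simpa [Matrix.sub_mul, Matrix.trace_sub] using ht
      simp only [transpose_sub, transpose_transpose, Matrix.sub_mul,
        Matrix.mul_sub, Matrix.trace_sub]
      linarith
    have hA : M - Mᵀ = 0 := aux_trace_transpose_mul_self_eq_zero _ htrA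
    have hTT : T - Tᵀ = 0 := by rw [key, hA]
    rw [skewPart, hTT, smul_zero]
  · intro hsym
    have hTT : T - Tᵀ = 0 := by
      simp [hT, transpose_sub, transpose_smul, transpose_mul, hsym]
    rw [skewPart, hTT, smul_zero]
end
end

section
/- For μ > μ_c ≥ 0 and F ∈ GL⁺(3) with distinct singular values σ₁ > σ₂ > σ₃ > 0 satisfying σ₁ + σ₂ ≥ ρ := 2μ/(μ−μ_c), let D = diag(σ₁,σ₂,σ₃) and let R̂ be the z-axis rotation with cosine entry c̃ = ρ/(σ₁+σ₂) and sine entry s̃ = √(1−c̃²); then μ‖sym(R̂D−1)‖² + μ_c‖skew(R̂D−1)‖² = (μ/2)(σ₁−σ₂)² + μ(σ₃−1)² + (μ/2)(ρ−2)² + (μ_c/2)(σ₁+σ₂)² − (μ_c/2)ρ². -/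
set_option maxHeartbeats 800000


open Matrix

noncomputable section

/-- Non-classical reduced energy: for `μ > μ_c ≥ 0`, `ρ = 2μ/(μ−μ_c)`,
`σ₁ > σ₂ > σ₃ > 0` with `σ₁+σ₂ ≥ ρ`, `c̃ = ρ/(σ₁+σ₂)`, `s̃ = √(1−c̃²)` and `R̂`
the z-axis rotation with rows `(c̃,−s̃,0),(s̃,c̃,0),(0,0,1)`:
`μ‖sym(R̂D−1)‖² + μ_c‖skew(R̂D−1)‖² =
 (μ/2)(σ₁−σ₂)² + μ(σ₃−1)² + (μ/2)(ρ−2)² + (μ_c/2)(σ₁+σ₂)² − (μ_c/2)ρ²`. -/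
theorem reduced_energy_nonclassical
    (μ μc : ℝ) (hμc : 0 ≤ μc) (hlt : μc < μ)
    (ρ : ℝ) (hρ : ρ = 2 * μ / (μ - μc))
    (σ₁ σ₂ σ₃ : ℝ) (h12 : σ₂ < σ₁) (h23 : σ₃ < σ₂) (h3 : 0 < σ₃)
    (hs : ρ ≤ σ₁ + σ₂)
    (c s : ℝ) (hc : c = ρ / (σ₁ + σ₂)) (hss : s = Real.sqrt (1 - c^2))
    (R D : Matrix (Fin 3) (Fin 3) ℝ)
    (hR : R = !![c, -s, 0; s, c, 0; 0, 0, 1])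
    (hD : D = !![σ₁, 0, 0; 0, σ₂, 0; 0, 0, σ₃]) :
    μ * fnormSq (symPart (R * D - 1)) + μc * fnormSq (skewPart (R * D - 1)) =
      (μ/2) * (σ₁ - σ₂)^2 + μ * (σ₃ - 1)^2 + (μ/2) * (ρ - 2)^2 +
      (μc/2) * (σ₁ + σ₂)^2 - (μc/2) * ρ^2 := by
  have hρpos : 0 < ρ := by
    have h1 : 0 < μ := lt_of_le_of_lt hμc hlt
    have h2 : 0 < μ - μc := by linarith
    rw [hρ]; positivity
  have hσ : 0 < σ₁ + σ₂ := lt_of_lt_of_le hρpos hs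
  have hρc : ρ = c * (σ₁ + σ₂) := by
    rw [hc]; field_simp
  have hc1 : c ≤ 1 := by
    rw [hc]; rw [div_le_one hσ]; exact hs
  have hc0 : 0 ≤ c := by
    rw [hc]; positivity
  have hs2 : s ^ 2 = 1 - c ^ 2 := by
    rw [hss, Real.sq_sqrt]; nlinarith
  have hRD : R * D - 1 =
      !![c*σ₁ - 1, -(s*σ₂), 0; s*σ₁, c*σ₂ - 1, 0; 0, 0, σ₃ - 1] := by
    subst hR hD
    rw [Matrix.mul_fin_three, Matrix.one_fin_three]
    ext i j
    fin_cases i <;> fin_cases j <;> simp [Matrix.vecHead, Matrix.vecTail]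
  have hT : (!![c*σ₁ - 1, -(s*σ₂), 0; s*σ₁, c*σ₂ - 1, 0; 0, 0, σ₃ - 1])ᵀ =
      !![c*σ₁ - 1, s*σ₁, 0; -(s*σ₂), c*σ₂ - 1, 0; 0, 0, σ₃ - 1] := by
    ext i j
    fin_cases i <;> fin_cases j <;> simp [Matrix.vecHead, Matrix.vecTail]
  have hsym : symPart (R * D - 1) =
      !![c*σ₁ - 1, (s*σ₁ - s*σ₂)/2, 0; (s*σ₁ - s*σ₂)/2, c*σ₂ - 1, 0; 0, 0, σ₃ - 1] := by
    rw [symPart, hRD, hT]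
    ext i j
    fin_cases i <;> fin_cases j <;> simp [Matrix.vecHead, Matrix.vecTail] <;> ring
  have hskew : skewPart (R * D - 1) =
      !![0, -(s*σ₁ + s*σ₂)/2, 0; (s*σ₁ + s*σ₂)/2, 0, 0; 0, 0, 0] := by
    rw [skewPart, hRD, hT]
    ext i j
    fin_cases i <;> fin_cases j <;> simp [Matrix.vecHead, Matrix.vecTail] <;> ring
  rw [hsym, hskew]
  simp only [fnormSq, Fin.sum_univ_three]
  norm_num [Matrix.vecHead, Matrix.vecTail, Matrix.cons_val_two]
  linear_combination (μ*(σ₁-σ₂)^2/2 + μc*(σ₁+σ₂)^2/2) * hs2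
    - ((μ-μc)/2*(ρ + c*(σ₁+σ₂)) - 2*μ) * hρc
end
end
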